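/- For every measurable function g : ℝ³ → [0,∞) one has ∫_{ℝ³} ∫_{ℝ³} g(q)·g(q') / (|q| + |q'|) dq dq' ≤ 4π² ∫_{ℝ³} |q|²·g(q)² dq (the inequality is understood in [0,∞], with the convention that it is trivially true when the right-hand side is infinite). -/

import Mathlib

noncomputable section

open MeasureTheory Real Filter

/-- `ℝ³` as a Euclidean space. -/
abbrev R3 : Type := EuclideanSpace ℝ (Fin 3)

/-- The unitary Fourier transform of a function on `ℝ^{3m}`, realized as `Fin m → ℝ³`,
with the convention `f̂(p) = (2π)^{-3m/2} ∫ e^{-i x·p} f(x) dx`. -/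
def uFT (m : ℕ) (f : (Fin m → R3) → ℂ) (p : Fin m → R3) : ℂ :=
  Complex.ofReal ((2 * Real.pi) ^ (-(3 * (m : ℝ)) / 2)) *
    ∫ x : Fin m → R3,
      Complex.exp (-Complex.I * Complex.ofReal (∑ i, (inner ℝ (x i) (p i) : ℝ))) * f x

/-- Squared `L²`-norm on `ℝ^{3m}`. -/
def l2normSq (m : ℕ) (f : (Fin m → R3) → ℂ) : ℝ :=
  ∫ x : Fin m → R3, ‖f x‖ ^ 2

/-- Squared Sobolev `H^s`-norm, `∫ (1+|p|²)^s |f̂(p)|² dp`. -/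
def sobNormSq (m : ℕ) (s : ℝ) (f : (Fin m → R3) → ℂ) : ℝ :=
  ∫ p : Fin m → R3, (1 + ∑ i, ‖p i‖ ^ 2) ^ s * ‖uFT m f p‖ ^ 2

/-- Membership in the Sobolev space `H^s(ℝ^{3m})`. -/
def MemHs (m : ℕ) (s : ℝ) (f : (Fin m → R3) → ℂ) : Prop :=
  MemLp f 2 (volume : Measure (Fin m → R3)) ∧
    Integrable (fun p : Fin m → R3 => (1 + ∑ i, ‖p i‖ ^ 2) ^ s * ‖uFT m f p‖ ^ 2)

/-- Squared `L²`-norm of the gradient, `∫ |p|² |f̂(p)|² dp`. -/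
def gradNormSq (m : ℕ) (f : (Fin m → R3) → ℂ) : ℝ :=
  ∫ p : Fin m → R3, (∑ i, ‖p i‖ ^ 2) * ‖uFT m f p‖ ^ 2

/-- Membership in `ℋ*_{N-1}` (here `N = m+3`): square integrable and symmetric under
permutations of the last `m+1` (three-dimensional) variables. -/
def SymCharge (m : ℕ) (ξ : (Fin (m + 2) → R3) → ℂ) : Prop :=
  MemLp ξ 2 (volume : Measure (Fin (m + 2) → R3)) ∧
    ∀ σ : Equiv.Perm (Fin (m + 2)), σ 0 = 0 →
      ∀ y : Fin (m + 2) → R3, ξ (y ∘ σ) = ξ y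

/-- The Green function of `-Δ + λ` on `ℝ^{3n}`. -/
def green (n : ℕ) (lam : ℝ) (x y : Fin n → R3) : ℝ :=
  ∫ t in Set.Ioi (0 : ℝ),
    Real.exp (-lam * t) * (4 * Real.pi * t) ^ (-(3 * (n : ℝ)) / 2) *
      Real.exp (-(∑ i, ‖x i - y i‖ ^ 2) / (4 * t))

/-- The configuration `(y, y, Y)` built from `(y, Y)`. -/
def dbl (m : ℕ) (z : Fin (m + 2) → R3) : Fin (m + 3) → R3 := fun i =>
  if (i : ℕ) ≤ 1 then z 0
  else z ⟨(i : ℕ) - 1, by have := i.isLt; omega⟩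

/-- Momentum reassembly `(p₁+p₂, p₃, P)`. -/
def off1L (m : ℕ) (q : Fin (m + 3) → R3) : Fin (m + 2) → R3 := fun i =>
  if (i : ℕ) = 0 then q 0 + q 1
  else if (i : ℕ) = 1 then q 2
  else q ⟨(i : ℕ) + 1, by have := i.isLt; omega⟩

/-- Momentum reassembly `(p₁+p₃, p₂, P)`. -/
def off1R (m : ℕ) (q : Fin (m + 3) → R3) : Fin (m + 2) → R3 := fun i =>
  if (i : ℕ) = 0 then q 0 + q 2
  else if (i : ℕ) = 1 then q 1
  else q ⟨(i : ℕ) + 1, by have := i.isLt; omega⟩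

/-- Momentum reassembly `(p₃+p₄, p₁, p₂, P)` (requires `N ≥ 4`, i.e. `1 ≤ m`). -/
def off0L (m : ℕ) (h : 1 ≤ m) (q : Fin (m + 3) → R3) : Fin (m + 2) → R3 := fun i =>
  if (i : ℕ) = 0 then q 2 + q ⟨3, by omega⟩
  else if (i : ℕ) = 1 then q 0
  else if (i : ℕ) = 2 then q 1
  else q ⟨(i : ℕ) + 1, by have := i.isLt; omega⟩

/-- Momentum reassembly `(p₁+p₂, p₃, p₄, P)` (requires `N ≥ 4`). -/
def off0R (m : ℕ) (h : 1 ≤ m) (q : Fin (m + 3) → R3) : Fin (m + 2) → R3 := fun i =>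
  if (i : ℕ) = 0 then q 0 + q 1
  else if (i : ℕ) = 1 then q 2
  else if (i : ℕ) = 2 then q ⟨3, by omega⟩
  else q ⟨(i : ℕ) + 1, by have := i.isLt; omega⟩

/-- The diagonal part `Φ^λ_diag` of the quadratic form of the charges. -/
def PhiDiag (m : ℕ) (lam : ℝ) (ξ : (Fin (m + 2) → R3) → ℂ) : ℝ :=
  (1 / Real.sqrt 2) *
    ∫ p : Fin (m + 2) → R3,
      Real.sqrt (‖p 0‖ ^ 2 / 2 + (∑ i : Fin (m + 1), ‖p i.succ‖ ^ 2) + lam) *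
        ‖uFT (m + 2) ξ p‖ ^ 2

/-- The off-diagonal part `Φ^λ_{off;1}` (here `N = m+3`). -/
def PhiOff1 (m : ℕ) (lam : ℝ) (ξ : (Fin (m + 2) → R3) → ℂ) : ℝ :=
  (-(2 * ((m : ℝ) + 1)) / Real.pi ^ 2) *
    (∫ q : Fin (m + 3) → R3,
      (starRingEnd ℂ) (uFT (m + 2) ξ (off1L m q)) * uFT (m + 2) ξ (off1R m q) /
        Complex.ofReal ((∑ i, ‖q i‖ ^ 2) + lam)).re

/-- The off-diagonal part `Φ^λ_{off;0}` (here `N = m+3`; it vanishes for `N = 3`). -/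
def PhiOff0 (m : ℕ) (lam : ℝ) (ξ : (Fin (m + 2) → R3) → ℂ) : ℝ :=
  if h : 1 ≤ m then
    (-(((m : ℝ) + 1) * (m : ℝ)) / (2 * Real.pi ^ 2)) *
      (∫ q : Fin (m + 3) → R3,
        (starRingEnd ℂ) (uFT (m + 2) ξ (off0L m h q)) * uFT (m + 2) ξ (off0R m h q) /
          Complex.ofReal ((∑ i, ‖q i‖ ^ 2) + lam)).re
  else 0

/-- The regularizing part `Φ_reg` (here `N = m+3`). -/
def PhiReg (m : ℕ) (α₀ γ : ℝ) (θ : ℝ → ℝ) (ξ : (Fin (m + 2) → R3) → ℂ) : ℝ :=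
  α₀ * l2normSq (m + 2) ξ +
    ((m : ℝ) + 1) * γ *
      (∫ y : Fin (m + 2) → R3, θ ‖y 0 - y 1‖ / ‖y 0 - y 1‖ * ‖ξ y‖ ^ 2) +
    (if h : 1 ≤ m then
      (((m : ℝ) + 1) * (m : ℝ) * γ / 4) *
        (∫ y : Fin (m + 2) → R3,
          θ ‖y 1 - y ⟨2, by omega⟩‖ / ‖y 1 - y ⟨2, by omega⟩‖ * ‖ξ y‖ ^ 2)
     else 0)

/-- The total quadratic form of the charges `Φ^λ` (here `N = m+3`). -/
def Phi (m : ℕ) (lam α₀ γ : ℝ) (θ : ℝ → ℝ) (ξ : (Fin (m + 2) → R3) → ℂ) : ℝ :=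
  4 * Real.pi * ((m : ℝ) + 3) * ((m : ℝ) + 2) *
    (PhiDiag m lam ξ + PhiOff0 m lam ξ + PhiOff1 m lam ξ + PhiReg m α₀ γ θ ξ)

/-- Hypotheses on the function `θ`: essentially bounded, measurable, with
`1 - r/b ≤ θ(r) ≤ 1 + r/b` for a.e. `r > 0`. -/
def ThetaOK (b : ℝ) (θ : ℝ → ℝ) : Prop :=
  Measurable θ ∧ (∃ C : ℝ, ∀ᵐ r : ℝ, 0 < r → |θ r| ≤ C) ∧
    ∀ᵐ r : ℝ, 0 < r → 1 - r / b ≤ θ r ∧ θ r ≤ 1 + r / b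

/-- The critical coupling `γ_c` (here `N = m+3`). -/
def gammaC (m : ℕ) : ℝ :=
  2 - 1 / (Real.pi * ((m : ℝ) + 1) * (1 / Real.sqrt 3 + (m : ℝ) / 8))

/-- The parameter `Λ_N` (here `N = m+3`). -/
def LambdaN (m : ℕ) (γ : ℝ) : ℝ :=
  max 0 (1 - ((m : ℝ) + 1) * Real.pi * (1 / Real.sqrt 3 + (m : ℝ) / 8) * (γ - gammaC m))

/-- The threshold `λ₀` (here `N = m+3`). -/
def lam0 (m : ℕ) (α₀ γ b : ℝ) : ℝ :=
  2 * max 0 (-α₀ + ((m : ℝ) + 4) * ((m : ℝ) + 1) * γ / (4 * b)) ^ 2 /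
    (1 - LambdaN m γ ^ 2)

/-- The order-preserving enumeration of the complement of two distinct indices
`i ≠ j` in `Fin (n+2)` (junk value if `i = j`). -/
def omitTwo (n : ℕ) (i j : Fin (n + 2)) : Fin n → Fin (n + 2) :=
  if h : i = j then fun _ => i
  else fun a =>
    ({i, j}ᶜ : Finset (Fin (n + 2))).orderEmbOfFin
      (by rw [Finset.card_compl, Finset.card_pair h, Fintype.card_fin]; omega) a

/-- The configuration `(x, x', x, X)` built from `(x, x', X)`. -/
def cfg9L (m : ℕ) (z : Fin (m + 2) → R3) : Fin (m + 3) → R3 := fun i =>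
  if (i : ℕ) = 0 then z 0
  else if (i : ℕ) = 1 then z 1
  else if (i : ℕ) = 2 then z 0
  else z ⟨(i : ℕ) - 1, by have := i.isLt; omega⟩

/-- The configuration `(x', x'', x, x, X)` built from `(x, x', x'', X)`. -/
def cfg10L (m : ℕ) (z : Fin (m + 3) → R3) : Fin (m + 4) → R3 := fun i =>
  if (i : ℕ) = 0 then z 1
  else if (i : ℕ) = 1 then z 2
  else if (i : ℕ) ≤ 3 then z 0
  else z ⟨(i : ℕ) - 1, by have := i.isLt; omega⟩

/-- The configuration `(y, y, y', y'', Y)` built from `(y, y', y'', Y)`. -/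
def cfg10R (m : ℕ) (w : Fin (m + 3) → R3) : Fin (m + 4) → R3 := fun i =>
  if (i : ℕ) ≤ 1 then w 0
  else if (i : ℕ) = 2 then w 1
  else if (i : ℕ) = 3 then w 2
  else w ⟨(i : ℕ) - 1, by have := i.isLt; omega⟩

/-- The total potential `G^λ ξ = Σ_{σ ∈ 𝒫_N} G^λ_σ ξ` (here `N = m+3`). -/
def potential (m : ℕ) (lam : ℝ) (ξ : (Fin (m + 2) → R3) → ℂ) (x : Fin (m + 3) → R3) : ℂ :=
  ∑ i : Fin (m + 3), ∑ j ∈ Finset.univ.filter (fun j => i < j),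
    Complex.ofReal (8 * Real.pi) *
      ∫ z : Fin (m + 2) → R3,
        ξ z * Complex.ofReal (green (m + 3) lam
          (Fin.cons (x i) (Fin.cons (x j) (fun a : Fin (m + 1) => x (omitTwo (m + 1) i j a))))
          (dbl m z))

/-- The squared norm `‖·‖²_{Φ^λ}` on the form domain. -/
def PhiNormSq (m : ℕ) (lam α₀ γ b : ℝ) (θ : ℝ → ℝ) (ζ : (Fin (m + 2) → R3) → ℂ) : ℝ :=
  Phi m lam α₀ γ θ ζ +
    4 * Real.pi * ((m : ℝ) + 3) * ((m : ℝ) + 2) *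
      (Real.sqrt (lam / 2) * (1 - Real.sqrt (1 - LambdaN m γ ^ 2)) - α₀ +
        ((m : ℝ) + 4) * ((m : ℝ) + 1) * γ / (4 * b)) * l2normSq (m + 2) ζ


open Set ContinuousLinearMap in
private lemma schur_cov {s : Set ℝ} {f f' : ℝ → ℝ} (hs : MeasurableSet s)
    (hf' : ∀ x ∈ s, HasDerivWithinAt f (f' x) s x) (hf : Set.InjOn f s) (g : ℝ → ENNReal) :
    ∫⁻ x in f '' s, g x = ∫⁻ x in s, ENNReal.ofReal |f' x| * g (f x) := by
  simpa only [ContinuousLinearMap.det_toSpanSingleton] using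
    lintegral_image_eq_lintegral_abs_det_fderiv_mul volume hs
      (fun x hx => (hf' x hx).hasFDerivWithinAt) hf g

open Set in
private lemma schur_half_pi :
    ∫⁻ u in Ioi (0:ℝ), ENNReal.ofReal ((1 + u^2)⁻¹) = ENNReal.ofReal (π/2) := by
  rw [← ofReal_integral_eq_lintegral_ofReal integrable_inv_one_add_sq.integrableOn
    (Filter.Eventually.of_forall fun x => by positivity)]
  simp

open Set in
private lemma schur_oneD (a : ℝ) (ha : 0 < a) :
    ∫⁻ r in Ioi (0:ℝ), ENNReal.ofReal (r ^ (-(1:ℝ)/2) / (a + r)) =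
      ENNReal.ofReal (π * a ^ (-(1:ℝ)/2)) := by
  have himg : (fun u : ℝ => a * u ^ 2) '' Ioi 0 = Ioi 0 := by
    ext r
    constructor
    · rintro ⟨u, hu, rfl⟩
      exact mul_pos ha (pow_pos hu 2)
    · intro hr
      refine ⟨Real.sqrt (r / a), Real.sqrt_pos.2 (div_pos hr ha), ?_⟩
      simp only []
      rw [Real.sq_sqrt (div_pos hr ha).le, mul_div_cancel₀ _ ha.ne']
  have hderiv : ∀ u ∈ Ioi (0:ℝ),
      HasDerivWithinAt (fun u : ℝ => a * u ^ 2) (2 * a * u) (Ioi 0) u := by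
    intro u _
    have := ((hasDerivAt_pow 2 u).const_mul a)
    exact this.hasDerivWithinAt.congr_deriv (by push_cast; ring)
  have hinj : Set.InjOn (fun u : ℝ => a * u ^ 2) (Ioi 0) := by
    intro u hu v hv h
    simp only at h
    have hu' : (0:ℝ) < u := hu
    have hv' : (0:ℝ) < v := hv
    have h2 : u ^ 2 = v ^ 2 := mul_left_cancel₀ ha.ne' h
    nlinarith
  rw [← himg, schur_cov measurableSet_Ioi hderiv hinj]
  have hcong : ∀ u ∈ Ioi (0:ℝ),
      ENNReal.ofReal |2 * a * u| * ENNReal.ofReal ((a * u ^ 2) ^ (-(1:ℝ)/2) / (a + a * u ^ 2)) =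
      ENNReal.ofReal (2 * a ^ (-(1:ℝ)/2)) * ENNReal.ofReal ((1 + u ^ 2)⁻¹) := by
    intro u hu
    have hu' : (0:ℝ) < u := hu
    rw [← ENNReal.ofReal_mul (abs_nonneg _), ← ENNReal.ofReal_mul (by positivity)]
    congr 1
    have h1 : (a * u ^ 2) ^ (-(1:ℝ)/2) = a ^ (-(1:ℝ)/2) * u⁻¹ := by
      rw [Real.mul_rpow ha.le (by positivity)]
      congr 1
      rw [← Real.rpow_natCast u 2, ← Real.rpow_mul hu'.le]
      norm_num
      exact Real.rpow_neg_one u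
    rw [abs_of_pos (by positivity), h1]
    have h2 : a + a * u ^ 2 = a * (1 + u ^ 2) := by ring
    rw [h2]
    have h3 : (0:ℝ) < 1 + u ^ 2 := by positivity
    field_simp
  rw [setLIntegral_congr_fun measurableSet_Ioi hcong,
    lintegral_const_mul' _ _ ENNReal.ofReal_ne_top, schur_half_pi,
    ← ENNReal.ofReal_mul (by positivity)]
  congr 1
  ring

open Set Module in
private lemma schur_polar {E : Type*} [NormedAddCommGroup E] [NormedSpace ℝ E] [MeasurableSpace E]
    [BorelSpace E] [Nontrivial E] [FiniteDimensional ℝ E] (μ : Measure E) [μ.IsAddHaarMeasure]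
    (f : ℝ → ENNReal) (hf : Measurable f) :
    ∫⁻ x, f ‖x‖ ∂μ = (finrank ℝ E) * μ (Metric.ball 0 1) *
      ∫⁻ r in Ioi (0:ℝ), ENNReal.ofReal (r ^ (finrank ℝ E - 1)) * f r := by
  have h1 : ∫⁻ x, f ‖x‖ ∂μ = ∫⁻ x : ({(0)}ᶜ : Set E), f ‖x.1‖ ∂(μ.comap (↑)) := by
    rw [lintegral_subtype_comap (measurableSet_singleton (0:E)).compl (fun y => f ‖y‖),
      MeasureTheory.restrict_compl_singleton]
  have h2 : ∫⁻ x : ({(0)}ᶜ : Set E), f ‖x.1‖ ∂(μ.comap (↑)) =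
      ∫⁻ x : Metric.sphere (0 : E) 1 × Ioi (0 : ℝ), f x.2
        ∂μ.toSphere.prod (.volumeIoiPow (finrank ℝ E - 1)) := by
    have h := μ.measurePreserving_homeomorphUnitSphereProd.lintegral_comp
      ((hf.comp measurable_subtype_coe).comp measurable_snd)
    simpa [Function.comp_def, homeomorphUnitSphereProd_apply_snd_coe] using h
  have h3 : ∫⁻ x : Metric.sphere (0 : E) 1 × Ioi (0 : ℝ), f x.2
        ∂μ.toSphere.prod (.volumeIoiPow (finrank ℝ E - 1)) =
      μ.toSphere univ * ∫⁻ r : Ioi (0:ℝ), f r.1 ∂(Measure.volumeIoiPow (finrank ℝ E - 1)) := by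
    rw [lintegral_prod (fun x : Metric.sphere (0 : E) 1 × Ioi (0 : ℝ) => f x.2)
      (((hf.comp measurable_subtype_coe).comp measurable_snd).aemeasurable)]
    simp [lintegral_const, mul_comm]
  have h4 : ∫⁻ r : Ioi (0:ℝ), f r.1 ∂(Measure.volumeIoiPow (finrank ℝ E - 1)) =
      ∫⁻ r in Ioi (0:ℝ), ENNReal.ofReal (r ^ (finrank ℝ E - 1)) * f r := by
    rw [Measure.volumeIoiPow,
      lintegral_withDensity_eq_lintegral_mul (Measure.comap Subtype.val volume)
        ((measurable_subtype_coe.pow_const _).ennreal_ofReal)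
        (g := fun r : Ioi (0:ℝ) => f r.1) (hf.comp measurable_subtype_coe)]
    simp only [Pi.mul_apply]
    rw [lintegral_subtype_comap measurableSet_Ioi
      (fun r : ℝ => ENNReal.ofReal (r ^ (finrank ℝ E - 1)) * f r)]
  rw [h1, h2, h3, h4, Measure.toSphere_apply_univ, mul_assoc]

private lemma schur_ball_R3 :
    (volume : Measure R3) (Metric.ball 0 1) = ENNReal.ofReal (4/3*π) := by
  rw [EuclideanSpace.volume_ball]
  have hc : Fintype.card (Fin 3) = 3 := by simp
  rw [hc]
  have hg : Real.Gamma ((3:ℝ)/2 + 1) = 3/4 * Real.sqrt π := by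
    rw [Real.Gamma_add_one (by norm_num)]
    have : (3:ℝ)/2 = 1/2 + 1 := by norm_num
    rw [this, Real.Gamma_add_one (by norm_num), Real.Gamma_one_half_eq]
    ring
  push_cast
  rw [hg]
  have hs : Real.sqrt π ^ 3 = π * Real.sqrt π := by
    rw [pow_succ, pow_two, Real.mul_self_sqrt Real.pi_pos.le]
  have hsp : Real.sqrt π ≠ 0 := by positivity
  rw [hs]
  norm_num
  congr 1
  field_simp
  ring
  rw [← ENNReal.ofReal_mul (by norm_num), mul_comm]

open Set in
private lemma schur_Ia (a : ℝ) (ha : 0 < a) :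
    ∫⁻ q : R3, ENNReal.ofReal (‖q‖ ^ (-(5:ℝ)/2) / (a + ‖q‖)) =
      ENNReal.ofReal (4 * π^2 * a ^ (-(1:ℝ)/2)) := by
  have hf : Measurable fun r : ℝ => ENNReal.ofReal (r ^ (-(5:ℝ)/2) / (a + r)) := by
    fun_prop
  rw [schur_polar volume _ hf]
  have hrank : Module.finrank ℝ R3 = 3 := by simp [finrank_euclideanSpace]
  rw [hrank, schur_ball_R3]
  have hcong : ∀ r ∈ Ioi (0:ℝ),
      ENNReal.ofReal (r ^ (3-1)) * ENNReal.ofReal (r ^ (-(5:ℝ)/2) / (a + r)) =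
        ENNReal.ofReal (r ^ (-(1:ℝ)/2) / (a + r)) := by
    intro r hr
    have hr' : (0:ℝ) < r := hr
    rw [← ENNReal.ofReal_mul (by positivity)]
    congr 1
    have : (r:ℝ) ^ (3-1 : ℕ) = r ^ ((2:ℕ):ℝ) := by
      rw [Real.rpow_natCast]
    rw [this, div_eq_mul_inv, div_eq_mul_inv, ← mul_assoc, ← Real.rpow_add hr']
    norm_num [div_eq_mul_inv]
  rw [setLIntegral_congr_fun measurableSet_Ioi hcong,
    schur_oneD a ha]
  have h3 : ((3:ℕ):ENNReal) = ENNReal.ofReal 3 := by norm_num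
  rw [h3, ← ENNReal.ofReal_mul (by norm_num), ← ENNReal.ofReal_mul (by positivity)]
  congr 1
  ring

private lemma schur_amgm (g1 g2 A C : ℝ) (hA : 0 < A) (hC : 0 < C) (hAC : A * C = 1) :
    g1 * g2 ≤ 2⁻¹ * (g1^2 * A + g2^2 * C) := by
  have hs := Real.sqrt_pos.2 hA
  have h1 : Real.sqrt A ^ 2 = A := Real.sq_sqrt hA.le
  have hC' : C = A⁻¹ := by
    field_simp
    rw [mul_comm] at hAC
    exact hAC
  have h2 : (g2 / Real.sqrt A) ^ 2 = g2^2 * C := by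
    rw [div_pow, h1, hC', div_eq_mul_inv]
  have h3 : (g1 * Real.sqrt A) * (g2 / Real.sqrt A) = g1 * g2 := by
    field_simp
  nlinarith [sq_nonneg (g1 * Real.sqrt A - g2 / Real.sqrt A)]

set_option maxHeartbeats 1000000 in
/-- Schur-test estimate: for every measurable `g : ℝ³ → [0,∞)`,
`∫∫ g(q)g(q')/(|q|+|q'|) dq dq' ≤ 4π² ∫ |q|² g(q)² dq`, in `[0,∞]`. -/
theorem statement13 (g : R3 → ℝ) (hg : Measurable g) (hg0 : ∀ q, 0 ≤ g q) :
    (∫⁻ q : R3, ∫⁻ q' : R3, ENNReal.ofReal (g q * g q' / (‖q‖ + ‖q'‖)))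
      ≤ ENNReal.ofReal (4 * Real.pi ^ 2) * ∫⁻ q : R3, ENNReal.ofReal (‖q‖ ^ 2 * g q ^ 2) := by
  classical
  have hne : ∀ᵐ q : R3, q ≠ (0:R3) := by
    rw [MeasureTheory.ae_iff]
    simpa using measure_singleton (0 : R3)
  set B : R3 → R3 → ENNReal := fun q q' =>
    ENNReal.ofReal (g q ^ 2 * ‖q‖ ^ ((5:ℝ)/2)) *
      ENNReal.ofReal (‖q'‖ ^ (-(5:ℝ)/2) / (‖q‖ + ‖q'‖)) with hBdef
  have hBmeas : Measurable (Function.uncurry B) := by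
    apply Measurable.mul (f := fun p : R3 × R3 => ENNReal.ofReal (g p.1 ^ 2 * ‖p.1‖ ^ ((5:ℝ)/2))) (g := fun p : R3 × R3 => ENNReal.ofReal (‖p.2‖ ^ (-(5:ℝ)/2) / (‖p.1‖ + ‖p.2‖)))
    · fun_prop
    · fun_prop
  have hBmeas' : Measurable (Function.uncurry fun q q' : R3 => B q' q) :=
    hBmeas.comp measurable_swap
  have hhalf : ENNReal.ofReal (2⁻¹:ℝ) = 2⁻¹ := by
    rw [ENNReal.ofReal_inv_of_pos (by norm_num)]
    norm_num
  -- pointwise bound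
  have hpt : ∀ q : R3, q ≠ 0 → ∀ q' : R3, q' ≠ 0 →
      ENNReal.ofReal (g q * g q' / (‖q‖ + ‖q'‖)) ≤ 2⁻¹ * B q q' + 2⁻¹ * B q' q := by
    intro q hq q' hq'
    have hx : (0:ℝ) < ‖q‖ := norm_pos_iff.mpr hq
    have hy : (0:ℝ) < ‖q'‖ := norm_pos_iff.mpr hq'
    have hsxy : (0:ℝ) < ‖q‖ + ‖q'‖ := by positivity
    have hA : (0:ℝ) < ‖q‖ ^ ((5:ℝ)/2) * ‖q'‖ ^ (-(5:ℝ)/2) := by positivity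
    have hC : (0:ℝ) < ‖q'‖ ^ ((5:ℝ)/2) * ‖q‖ ^ (-(5:ℝ)/2) := by positivity
    have ex : ‖q‖ ^ (-(5:ℝ)/2) = (‖q‖ ^ ((5:ℝ)/2))⁻¹ := by
      rw [neg_div, Real.rpow_neg hx.le]
    have ey : ‖q'‖ ^ (-(5:ℝ)/2) = (‖q'‖ ^ ((5:ℝ)/2))⁻¹ := by
      rw [neg_div, Real.rpow_neg hy.le]
    have hAC : (‖q‖ ^ ((5:ℝ)/2) * ‖q'‖ ^ (-(5:ℝ)/2)) *
        (‖q'‖ ^ ((5:ℝ)/2) * ‖q‖ ^ (-(5:ℝ)/2)) = 1 := by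
      rw [ex, ey]
      have h1 : ‖q‖ ^ ((5:ℝ)/2) ≠ 0 := by positivity
      have h2 : ‖q'‖ ^ ((5:ℝ)/2) ≠ 0 := by positivity
      field_simp
    have ham := schur_amgm (g q) (g q') _ _ hA hC hAC
    have hreal : g q * g q' / (‖q‖ + ‖q'‖) ≤
        2⁻¹ * ((g q ^ 2 * ‖q‖ ^ ((5:ℝ)/2)) * (‖q'‖ ^ (-(5:ℝ)/2) / (‖q‖ + ‖q'‖))) +
        2⁻¹ * ((g q' ^ 2 * ‖q'‖ ^ ((5:ℝ)/2)) * (‖q‖ ^ (-(5:ℝ)/2) / (‖q'‖ + ‖q‖))) := by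
      have h := (div_le_div_iff_of_pos_right hsxy).mpr ham
      calc g q * g q' / (‖q‖ + ‖q'‖)
          ≤ 2⁻¹ * (g q ^ 2 * (‖q‖ ^ ((5:ℝ)/2) * ‖q'‖ ^ (-(5:ℝ)/2)) +
              g q' ^ 2 * (‖q'‖ ^ ((5:ℝ)/2) * ‖q‖ ^ (-(5:ℝ)/2))) / (‖q‖ + ‖q'‖) := h
        _ = 2⁻¹ * ((g q ^ 2 * ‖q‖ ^ ((5:ℝ)/2)) * (‖q'‖ ^ (-(5:ℝ)/2) / (‖q‖ + ‖q'‖))) +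
            2⁻¹ * ((g q' ^ 2 * ‖q'‖ ^ ((5:ℝ)/2)) * (‖q‖ ^ (-(5:ℝ)/2) / (‖q'‖ + ‖q‖))) := by
            rw [add_comm (‖q'‖) (‖q‖)]
            ring
    have em : ∀ u v : ℝ, 0 ≤ u → 0 ≤ v →
        ENNReal.ofReal (2⁻¹ * (u * v)) = 2⁻¹ * (ENNReal.ofReal u * ENNReal.ofReal v) := by
      intro u v hu hv
      rw [ENNReal.ofReal_mul (by norm_num : (0:ℝ) ≤ 2⁻¹), hhalf, ENNReal.ofReal_mul hu]
    calc ENNReal.ofReal (g q * g q' / (‖q‖ + ‖q'‖))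
        ≤ ENNReal.ofReal
            (2⁻¹ * ((g q ^ 2 * ‖q‖ ^ ((5:ℝ)/2)) * (‖q'‖ ^ (-(5:ℝ)/2) / (‖q‖ + ‖q'‖))) +
             2⁻¹ * ((g q' ^ 2 * ‖q'‖ ^ ((5:ℝ)/2)) * (‖q‖ ^ (-(5:ℝ)/2) / (‖q'‖ + ‖q‖)))) :=
          ENNReal.ofReal_le_ofReal hreal
      _ = 2⁻¹ * B q q' + 2⁻¹ * B q' q := by
          rw [ENNReal.ofReal_add (by positivity) (by positivity),
            em _ _ (by positivity) (by positivity), em _ _ (by positivity) (by positivity)]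
  -- inner integral of B
  have hinner : ∀ q : R3, q ≠ 0 →
      (∫⁻ q' : R3, B q q') =
        ENNReal.ofReal (4 * Real.pi ^ 2) * ENNReal.ofReal (‖q‖ ^ 2 * g q ^ 2) := by
    intro q hq
    have hx : (0:ℝ) < ‖q‖ := norm_pos_iff.mpr hq
    simp only [hBdef]
    rw [lintegral_const_mul' _ _ ENNReal.ofReal_ne_top, schur_Ia ‖q‖ hx,
      ← ENNReal.ofReal_mul (by positivity), ← ENNReal.ofReal_mul (by positivity)]
    congr 1
    have hxx : ‖q‖ ^ ((5:ℝ)/2) * ‖q‖ ^ (-(1:ℝ)/2) = ‖q‖ ^ (2:ℕ) := by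
      rw [← Real.rpow_add hx, ← Real.rpow_natCast ‖q‖ 2]
      norm_num
    calc g q ^ 2 * ‖q‖ ^ ((5:ℝ)/2) * (4 * Real.pi ^ 2 * ‖q‖ ^ (-(1:ℝ)/2))
        = 4 * Real.pi ^ 2 * (g q ^ 2 * (‖q‖ ^ ((5:ℝ)/2) * ‖q‖ ^ (-(1:ℝ)/2))) := by ring
      _ = 4 * Real.pi ^ 2 * (‖q‖ ^ 2 * g q ^ 2) := by rw [hxx]; ring
  set X : ENNReal :=
    ENNReal.ofReal (4 * Real.pi ^ 2) * ∫⁻ q : R3, ENNReal.ofReal (‖q‖ ^ 2 * g q ^ 2) with hX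
  have hI1 : (∫⁻ q : R3, ∫⁻ q' : R3, B q q') = X := by
    rw [hX, ← lintegral_const_mul' _ _ ENNReal.ofReal_ne_top]
    refine lintegral_congr_ae ?_
    filter_upwards [hne] with q hq
    exact hinner q hq
  have hI2 : (∫⁻ q : R3, ∫⁻ q' : R3, B q' q) = X := by
    rw [lintegral_lintegral_swap hBmeas'.aemeasurable]
    exact hI1
  calc (∫⁻ q : R3, ∫⁻ q' : R3, ENNReal.ofReal (g q * g q' / (‖q‖ + ‖q'‖)))
      ≤ ∫⁻ q : R3, ∫⁻ q' : R3, (2⁻¹ * B q q' + 2⁻¹ * B q' q) := by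
        refine lintegral_mono_ae ?_
        filter_upwards [hne] with q hq
        refine lintegral_mono_ae ?_
        filter_upwards [hne] with q' hq'
        exact hpt q hq q' hq'
    _ = ∫⁻ q : R3, (2⁻¹ * ∫⁻ q' : R3, B q q') + 2⁻¹ * ∫⁻ q' : R3, B q' q := by
        refine lintegral_congr fun q => ?_
        rw [lintegral_add_left (f := fun q' => 2⁻¹ * B q q')
            (measurable_const.mul (hBmeas.comp (measurable_prodMk_left (x := q)))),
          lintegral_const_mul' (2⁻¹ : ENNReal) (fun q' => B q q') (by norm_num),
          lintegral_const_mul' (2⁻¹ : ENNReal) (fun q' => B q' q) (by norm_num)]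
    _ = 2⁻¹ * (∫⁻ q : R3, ∫⁻ q' : R3, B q q') +
          2⁻¹ * ∫⁻ q : R3, ∫⁻ q' : R3, B q' q := by
        rw [lintegral_add_left (f := fun q => 2⁻¹ * ∫⁻ q' : R3, B q q') (measurable_const.mul hBmeas.lintegral_prod_right),
          lintegral_const_mul' (2⁻¹ : ENNReal) (fun q => ∫⁻ q' : R3, B q q') (by norm_num),
          lintegral_const_mul' (2⁻¹ : ENNReal) (fun q => ∫⁻ q' : R3, B q' q) (by norm_num)]
    _ = X := by
        rw [hI1, hI2, ← ENNReal.div_eq_inv_mul, ENNReal.add_halves]
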